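/- Let 0 ≤ e < 1, define k(f) = 1 + e·cos f, let f₀ ∈ ℝ, and let J : ℝ → ℝ be differentiable with J'(f) = 1/k(f)² for all f. Define φ₂(f) = 3e²·k(f)·J(f)·sin f + k(f)·cos f − 2e. Then φ₂ is twice differentiable and φ₂''(f) + (4 − 3/k(f))·φ₂(f) = 0 for all f ∈ ℝ. -/

import Mathlib

/-!
Write `k = 1 + e cos f`, so `k' = -e sin f`, `k'' = -e cos f` and `J'' = 2e sin f / k³`.
In `φ₂'' + (4 - 3/k) φ₂` the coefficient of `J` is `3e²` times the same operator applied to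
`k sin f`, which vanishes: `k sin f` is the first fundamental solution. The remaining terms,
cleared of denominators, cancel by `sin² f + cos² f = 1`.
-/

open Real

def HasSecondDeriv (x x' x'' : ℝ → ℝ) : Prop :=
  ∀ t, HasDerivAt x (x' t) t ∧ HasDerivAt x' (x'' t) t

namespace HasSecondDeriv

variable {u u' u'' v v' v'' : ℝ → ℝ}

theorem differentiable (hu : HasSecondDeriv u u' u'') : Differentiable ℝ u :=
  fun t => (hu t).1.differentiableAt

theorem deriv_eq (hu : HasSecondDeriv u u' u'') : deriv u = u' :=
  funext fun t => (hu t).1.deriv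

theorem differentiable_deriv (hu : HasSecondDeriv u u' u'') : Differentiable ℝ (deriv u) :=
  hu.deriv_eq ▸ fun t => (hu t).2.differentiableAt

theorem deriv_deriv (hu : HasSecondDeriv u u' u'') : deriv (deriv u) = u'' :=
  hu.deriv_eq ▸ funext fun t => (hu t).2.deriv

theorem add (hu : HasSecondDeriv u u' u'') (hv : HasSecondDeriv v v' v'') :
    HasSecondDeriv (fun t => u t + v t) (fun t => u' t + v' t) (fun t => u'' t + v'' t) :=
  fun t => ⟨(hu t).1.add (hv t).1, (hu t).2.add (hv t).2⟩

theorem const_add (c : ℝ) (hu : HasSecondDeriv u u' u'') :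
    HasSecondDeriv (fun t => c + u t) u' u'' :=
  fun t => ⟨(hu t).1.const_add c, (hu t).2⟩

theorem sub_const (c : ℝ) (hu : HasSecondDeriv u u' u'') :
    HasSecondDeriv (fun t => u t - c) u' u'' :=
  fun t => ⟨(hu t).1.sub_const c, (hu t).2⟩

theorem const_mul (c : ℝ) (hu : HasSecondDeriv u u' u'') :
    HasSecondDeriv (fun t => c * u t) (fun t => c * u' t) (fun t => c * u'' t) :=
  fun t => ⟨(hu t).1.const_mul c, (hu t).2.const_mul c⟩

theorem mul (hu : HasSecondDeriv u u' u'') (hv : HasSecondDeriv v v' v'') :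
    HasSecondDeriv (fun t => u t * v t) (fun t => u' t * v t + u t * v' t)
      (fun t => u'' t * v t + 2 * (u' t * v' t) + u t * v'' t) := by
  intro t
  refine ⟨(hu t).1.mul (hv t).1, ?_⟩
  exact (((hu t).2.mul (hv t).1).add ((hu t).1.mul (hv t).2)).congr_deriv (by ring)

end HasSecondDeriv

theorem hasSecondDeriv_sin : HasSecondDeriv sin cos (fun t => -sin t) :=
  fun t => ⟨hasDerivAt_sin t, hasDerivAt_cos t⟩

theorem hasSecondDeriv_cos : HasSecondDeriv cos (fun t => -sin t) (fun t => -cos t) :=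
  fun t => ⟨hasDerivAt_cos t, (hasDerivAt_sin t).neg⟩

theorem hasSecondDeriv_of_deriv_eq_one_div_sq {k k' J : ℝ → ℝ}
    (hk : ∀ t, HasDerivAt k (k' t) t) (hk0 : ∀ t, k t ≠ 0)
    (hJ : Differentiable ℝ J) (hJ' : ∀ t, deriv J t = 1 / k t ^ 2) :
    HasSecondDeriv J (fun t => 1 / k t ^ 2) (fun t => -(2 * k' t) / k t ^ 3) := by
  intro t
  refine ⟨(hJ t).hasDerivAt.congr_deriv (hJ' t), ?_⟩
  refine ((hasDerivAt_const t (1 : ℝ)).div ((hk t).fun_pow 2) (pow_ne_zero 2 (hk0 t))).congr_deriv ?_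
  field_simp [hk0 t]
  ring

theorem one_add_mul_cos_pos {e : ℝ} (he : |e| < 1) (t : ℝ) : 0 < 1 + e * cos t := by
  have h := neg_abs_le (e * cos t)
  rw [abs_mul] at h
  nlinarith [abs_cos_le_one t, abs_nonneg e, abs_nonneg (cos t)]

/-- The second Yamanaka–Ankersen fundamental solution
`φ₂ = 3e²·k·J·sin f + k·cos f − 2e`, where `k = 1 + e·cos f` and `J' = 1/k²`,
solves the homogeneous decoupled radial Tschauner–Hempel equation
`φ₂'' + (4 − 3/k)·φ₂ = 0`. -/
theorem stmt_4 (e : ℝ) (he0 : 0 ≤ e) (he1 : e < 1)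
    (k : ℝ → ℝ) (hk : ∀ f, k f = 1 + e * Real.cos f)
    (J : ℝ → ℝ) (hJ : Differentiable ℝ J) (hJ' : ∀ f, deriv J f = 1 / (k f) ^ 2)
    (φ₂ : ℝ → ℝ)
    (hφ₂ : ∀ f, φ₂ f = 3 * e ^ 2 * k f * J f * Real.sin f + k f * Real.cos f - 2 * e) :
    Differentiable ℝ φ₂ ∧ Differentiable ℝ (deriv φ₂) ∧
      ∀ f, deriv (deriv φ₂) f + (4 - 3 / k f) * φ₂ f = 0 := by
  obtain rfl : k = fun t => 1 + e * cos t := funext hk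
  obtain rfl := funext hφ₂
  have hk0 t : 1 + e * cos t ≠ 0 := (one_add_mul_cos_pos (abs_lt.2 ⟨by linarith, he1⟩) t).ne'
  have hK := (hasSecondDeriv_cos.const_mul e).const_add 1
  have hJ2 := hasSecondDeriv_of_deriv_eq_one_div_sq (fun t => (hK t).1) hk0 hJ hJ'
  have hφ := (((((hK.const_mul (3 * e ^ 2)).mul hJ2).mul hasSecondDeriv_sin).add
    (hK.mul hasSecondDeriv_cos)).sub_const (2 * e))
  refine ⟨hφ.differentiable, hφ.differentiable_deriv, fun t => ?_⟩
  rw [hφ.deriv_deriv]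
  field_simp [hk0 t]
  linear_combination (2 * e * (1 + e * cos t) ^ 2) * sin_sq_add_cos_sq t
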